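/- (Angle inversion for unary amplitudes.) Let w_0, …, w_d be nonnegative reals with Σ_{k=0}^{d} w_k² = 1 and such that Σ_{p=0}^{k−1} w_p² < 1 for all k ≤ d−1. Define θ_k = 2 arccos( w_k / sqrt(1 − Σ_{p=0}^{k−1} w_p²) ) for k = 0,…,d−1. Then the sequential-rotation amplitudes satisfy (∏_{m=0}^{k−1} sin(θ_m/2)) cos(θ_k/2) = w_k for 0 ≤ k ≤ d−1 and ∏_{m=0}^{d−1} sin(θ_m/2) = w_d. -/

import Mathlib

open Finset Real

/-!
Let `r k = 1 - ∑_{p<k} w_p²` (`remainingMass w k`) be the squared amplitude left after `k` rotations.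
Since `sin (arccos (w_k / √(r k))) = √(r (k+1)) / √(r k)`, the product of the first `k` sines
telescopes to `√(r k)`, and then `cos (θ_k / 2) = w_k / √(r k)` recovers `w_k`. At the end
`r d = w_d²` because the squares sum to `1`.
-/

theorem sin_arccos_div_sqrt_mul_sqrt {x s : ℝ} (hs : 0 < s) :
    sin (arccos (x / √s)) * √s = √(s - x ^ 2) := by
  rw [sin_arccos, ← sqrt_mul' _ hs.le, div_pow, sq_sqrt hs.le, sub_mul, div_mul_cancel₀ _ hs.ne',
    one_mul]

theorem cos_arccos_div_sqrt_mul_sqrt {x s : ℝ} (hs : 0 < s) (hx : x ^ 2 ≤ s) :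
    cos (arccos (x / √s)) * √s = x := by
  have hxs : |x| ≤ √s := by simpa [sqrt_sq_eq_abs] using sqrt_le_sqrt hx
  have hbound : |x / √s| ≤ 1 := by
    rw [abs_div, abs_of_pos (sqrt_pos.mpr hs)]
    exact div_le_one_of_le₀ hxs (sqrt_nonneg s)
  rw [cos_arccos (abs_le.mp hbound).1 (abs_le.mp hbound).2, div_mul_cancel₀ _ (sqrt_pos.mpr hs).ne']

def remainingMass (w : ℕ → ℝ) (k : ℕ) : ℝ := 1 - ∑ p ∈ range k, w p ^ 2

theorem remainingMass_zero (w : ℕ → ℝ) : remainingMass w 0 = 1 := by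
  simp [remainingMass]

theorem remainingMass_succ (w : ℕ → ℝ) (k : ℕ) : remainingMass w (k + 1) = remainingMass w k - w k ^ 2 := by
  rw [remainingMass, remainingMass, sum_range_succ]
  ring

theorem remainingMass_anti (w : ℕ → ℝ) {j k : ℕ} (hjk : j ≤ k) : remainingMass w k ≤ remainingMass w j :=
  sub_le_sub_left (sum_le_sum_of_subset_of_nonneg (range_subset_range.mpr hjk)
    fun _ _ _ => sq_nonneg _) 1

theorem sq_le_remainingMass {w : ℕ → ℝ} {d k : ℕ} (hsum : ∑ p ∈ range (d + 1), w p ^ 2 = 1)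
    (hk : k ≤ d) : w k ^ 2 ≤ remainingMass w k := by
  have h : 0 ≤ remainingMass w (k + 1) :=
    (sub_eq_zero.mpr hsum.symm).ge.trans (remainingMass_anti w (by omega))
  rw [remainingMass_succ] at h
  linarith

theorem prod_sin_arccos_eq_sqrt_remainingMass {w θ : ℕ → ℝ} {k : ℕ}
    (hpos : ∀ m < k, 0 < remainingMass w m)
    (hθ : ∀ m < k, θ m = arccos (w m / √(remainingMass w m))) :
    ∏ m ∈ range k, sin (θ m) = √(remainingMass w k) := by
  induction k with
  | zero => simp [remainingMass_zero]
  | succ k ih =>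
    rw [prod_range_succ, ih (fun m hm => hpos m (by omega)) (fun m hm => hθ m (by omega)),
      hθ k k.lt_succ_self, mul_comm, sin_arccos_div_sqrt_mul_sqrt (hpos k k.lt_succ_self),
      remainingMass_succ]

theorem stmt13 (d : ℕ) (w : ℕ → ℝ)
    (hnn : ∀ k ≤ d, 0 ≤ w k)
    (hsum : ∑ k ∈ Finset.range (d + 1), (w k) ^ 2 = 1)
    (hpartial : ∀ k < d, ∑ p ∈ Finset.range k, (w p) ^ 2 < 1)
    (θ : ℕ → ℝ)
    (hθ : ∀ k < d, θ k =
      2 * Real.arccos (w k / Real.sqrt (1 - ∑ p ∈ Finset.range k, (w p) ^ 2))) :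
    (∀ k < d,
      (∏ m ∈ Finset.range k, Real.sin (θ m / 2)) * Real.cos (θ k / 2) = w k) ∧
    (∏ m ∈ Finset.range d, Real.sin (θ m / 2)) = w d := by
  have hpos : ∀ k < d, 0 < remainingMass w k := fun k hk => sub_pos.mpr (hpartial k hk)
  have hhalf : ∀ k < d, θ k / 2 = arccos (w k / √(remainingMass w k)) := fun k hk => by
    rw [hθ k hk, remainingMass]
    ring
  have hprod : ∀ k ≤ d, ∏ m ∈ range k, sin (θ m / 2) = √(remainingMass w k) := fun k hk =>
    prod_sin_arccos_eq_sqrt_remainingMass (fun m hm => hpos m (by omega))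
      (fun m hm => hhalf m (by omega))
  have hlast : remainingMass w d = w d ^ 2 := by
    rw [← sub_eq_zero, ← remainingMass_succ, remainingMass, hsum, sub_self]
  refine ⟨fun k hk => ?_, ?_⟩
  · rw [hprod k hk.le, mul_comm, hhalf k hk,
      cos_arccos_div_sqrt_mul_sqrt (hpos k hk) (sq_le_remainingMass hsum hk.le)]
  · rw [hprod d le_rfl, hlast, sqrt_sq (hnn d le_rfl)]
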